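/- On the one-dimensional discrete torus ℤ/Nℤ (N ≥ 3), a weight r admits a decomposition r = ∑_{C} ρ(C) r^C with nonnegative coefficients over all cycles (the elementary 2-cycles C_{x,x+1} = (x,x+1,x), the full clockwise loop C₊ = (0,1,…,N−1,0) and the full anticlockwise loop C₋) if and only if the discrete vector field φ^r is constant, say φ^r(x,x+1) = c for all x (equivalently, φ^r has zero divergence at every vertex). Moreover, if φ^r ≡ c and m := min_{(x,y) ∈ E_N} r(x,y), then the nonnegative coefficient assignments ρ realizing such a decomposition are exactly those of the form, for some a ∈ [0,m]: ρ(C_{x,x+1}) = min{r(x,x+1), r(x+1,x)} − a for every x, ρ(C₊) = max(c,0) + a, and ρ(C₋) = max(−c,0) + a. -/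
import Mathlib


namespace Torus1D

/-- Vertices of the one-dimensional discrete torus of side `N = n + 3`. -/
abbrev V1 (n : ℕ) := ZMod (n + 3)

/-- `(a, b)` is an oriented edge of the one-dimensional discrete torus. -/
def isEdge1 (n : ℕ) (a b : V1 n) : Prop := b = a + 1 ∨ b = a - 1

instance (n : ℕ) (a b : V1 n) : Decidable (isEdge1 n a b) := by
  unfold isEdge1; infer_instance

/-- A weight: nonnegative and supported on edges. -/
def IsWeight1 (n : ℕ) (r : V1 n → V1 n → ℝ) : Prop :=
  (∀ a b, 0 ≤ r a b) ∧ ∀ a b, ¬isEdge1 n a b → r a b = 0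

/-- Weight of the elementary 2-cycle `C_{x,x+1} = (x, x+1, x)`. -/
def r2 (n : ℕ) (x : V1 n) (a b : V1 n) : ℝ :=
  if (a = x ∧ b = x + 1) ∨ (a = x + 1 ∧ b = x) then 1 else 0

/-- Weight of the full clockwise loop `C₊ = (0, 1, …, N-1, 0)`: `1` on every edge
`(a, a+1)`. -/
def rCp (n : ℕ) (a b : V1 n) : ℝ := if b = a + 1 then 1 else 0

/-- Weight of the full anticlockwise loop `C₋`: `1` on every edge `(a, a-1)`. -/
def rCm (n : ℕ) (a b : V1 n) : ℝ := if b = a - 1 then 1 else 0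

/-- The minimum of `r` over the edges. -/
noncomputable def mMin (n : ℕ) (r : V1 n → V1 n → ℝ) : ℝ :=
  Finset.univ.inf' ⟨0, Finset.mem_univ 0⟩ fun x : V1 n => min (r x (x + 1)) (r (x + 1) x)

lemma two_ne (n : ℕ) : (2 : ZMod (n+3)) ≠ 0 := by
  intro h
  have h2 : ((2:ℕ) : ZMod (n+3)) = 0 := by exact_mod_cast h
  rw [ZMod.natCast_eq_zero_iff] at h2
  have := Nat.le_of_dvd (by norm_num) h2
  omega

lemma addOne_ne_subOne (n : ℕ) (a : V1 n) : a + 1 ≠ a - 1 := by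
  intro h
  exact two_ne n (by linear_combination h)

lemma sum_r2_p (n : ℕ) (ρ : V1 n → ℝ) (a : V1 n) :
    ∑ x : V1 n, ρ x * r2 n x a (a+1) = ρ a := by
  rw [Finset.sum_eq_single a]
  · simp [r2]
  · intro x _ hx
    have h0 : r2 n x a (a+1) = 0 := by
      unfold r2
      rw [if_neg]
      rintro (⟨h1, _⟩ | ⟨h1, h2⟩)
      · exact hx h1.symm
      · exact addOne_ne_subOne n a (h2.trans (eq_sub_of_add_eq h1.symm))
    simp [h0]
  · simp

lemma sum_r2_m (n : ℕ) (ρ : V1 n → ℝ) (a : V1 n) :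
    ∑ x : V1 n, ρ x * r2 n x (a+1) a = ρ a := by
  rw [Finset.sum_eq_single a]
  · simp [r2]
  · intro x _ hx
    have h0 : r2 n x (a+1) a = 0 := by
      unfold r2
      rw [if_neg]
      rintro (⟨h1, h2⟩ | ⟨_, h2⟩)
      · exact addOne_ne_subOne n a (h1.trans (eq_sub_of_add_eq h2.symm))
      · exact hx h2.symm
    simp [h0]
  · simp

lemma sum_r2_none (n : ℕ) (ρ : V1 n → ℝ) (a b : V1 n) (h : ¬isEdge1 n a b) :
    ∑ x : V1 n, ρ x * r2 n x a b = 0 := by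
  apply Finset.sum_eq_zero
  intro x _
  have h0 : r2 n x a b = 0 := by
    unfold r2
    rw [if_neg]
    rintro (⟨h1, h2⟩ | ⟨h1, h2⟩)
    · exact h (Or.inl (by rw [h1, h2]))
    · exact h (Or.inr (by rw [h1, h2]; ring))
  simp [h0]

lemma decomp_iff (n : ℕ) (r : V1 n → V1 n → ℝ) (hr : IsWeight1 n r)
    (ρ : V1 n → ℝ) (ρp ρm : ℝ) :
    (∀ a b, r a b = (∑ x : V1 n, ρ x * r2 n x a b) + ρp * rCp n a b + ρm * rCm n a b)
    ↔ (∀ x, r x (x+1) = ρ x + ρp ∧ r (x+1) x = ρ x + ρm) := by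
  constructor
  · intro h x
    have ep1 : rCp n x (x+1) = 1 := if_pos rfl
    have em1 : rCm n x (x+1) = 0 := if_neg (addOne_ne_subOne n x)
    have ep2 : rCp n (x+1) x = 0 := by
      unfold rCp
      rw [if_neg]
      intro hh
      exact two_ne n (by linear_combination -hh)
    have em2 : rCm n (x+1) x = 1 := by
      unfold rCm
      rw [if_pos (by ring)]
    constructor
    · have := h x (x+1); rw [sum_r2_p, ep1, em1] at this; linarith
    · have := h (x+1) x; rw [sum_r2_m, ep2, em2] at this; linarith
  · intro h a b
    by_cases hp : b = a + 1
    · subst hp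
      have ep : rCp n a (a+1) = 1 := if_pos rfl
      have em : rCm n a (a+1) = 0 := if_neg (addOne_ne_subOne n a)
      rw [sum_r2_p, ep, em, (h a).1]
      ring
    · by_cases hm : b = a - 1
      · subst hm
        have ha : (a - 1) + 1 = a := by ring
        have e0 : ∑ x : V1 n, ρ x * r2 n x a (a-1) = ρ (a-1) := by
          have := sum_r2_m n ρ (a-1); rwa [ha] at this
        have ep : rCp n a (a-1) = 0 := if_neg (Ne.symm (addOne_ne_subOne n a))
        have em : rCm n a (a-1) = 1 := if_pos rfl
        have hv : r a (a-1) = ρ (a-1) + ρm := by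
          have := (h (a-1)).2; rwa [ha] at this
        rw [e0, ep, em, hv]; ring
      · have hE : ¬isEdge1 n a b := by rintro (h' | h') <;> [exact hp h'; exact hm h']
        have ep : rCp n a b = 0 := if_neg fun h' => hE (Or.inl h')
        have em : rCm n a b = 0 := if_neg fun h' => hE (Or.inr h')
        rw [sum_r2_none n ρ a b hE, ep, em, hr.2 a b hE]
        ring

lemma minmax1 (p q : ℝ) : min p q + max (p - q) 0 = p := by
  rcases le_total p q with h | h
  · rw [min_eq_left h, max_eq_right (sub_nonpos.2 h)]; ring
  · rw [min_eq_right h, max_eq_left (sub_nonneg.2 h)]; ring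

lemma minmax2 (p q : ℝ) : min p q + max (q - p) 0 = q := by
  rw [min_comm]; exact minmax1 q p

/-- A weight on the one-dimensional discrete torus decomposes into cycles (elementary
2-cycles and the two full loops) with nonnegative coefficients if and only if `φ^r` is
constant. Moreover, if `φ^r ≡ c`, the nonnegative coefficient assignments realizing such a
decomposition are exactly those parameterized by `a ∈ [0, m]`,
`m = min_{(x,y) ∈ E_N} r(x,y)`, via `ρ(C_{x,x+1}) = min{r(x,x+1), r(x+1,x)} - a`,
`ρ(C₊) = max(c,0) + a`, `ρ(C₋) = max(-c,0) + a`. -/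
theorem one_dim_cyclic_decomposition (n : ℕ) (r : V1 n → V1 n → ℝ)
    (hr : IsWeight1 n r) :
    ((∃ (ρ : V1 n → ℝ) (ρp ρm : ℝ), (∀ x, 0 ≤ ρ x) ∧ 0 ≤ ρp ∧ 0 ≤ ρm ∧
        ∀ a b, r a b = (∑ x : V1 n, ρ x * r2 n x a b) + ρp * rCp n a b + ρm * rCm n a b)
      ↔ ∃ c : ℝ, ∀ x : V1 n, r x (x + 1) - r (x + 1) x = c)
    ∧ ∀ c : ℝ, (∀ x : V1 n, r x (x + 1) - r (x + 1) x = c) →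
        ∀ (ρ : V1 n → ℝ) (ρp ρm : ℝ),
          (((∀ x, 0 ≤ ρ x) ∧ 0 ≤ ρp ∧ 0 ≤ ρm ∧
              ∀ a b, r a b = (∑ x : V1 n, ρ x * r2 n x a b) + ρp * rCp n a b + ρm * rCm n a b)
            ↔ ∃ a : ℝ, 0 ≤ a ∧ a ≤ mMin n r ∧
                (∀ x : V1 n, ρ x = min (r x (x + 1)) (r (x + 1) x) - a) ∧
                ρp = max c 0 + a ∧ ρm = max (-c) 0 + a) := by
  constructor
  · constructor
    · rintro ⟨ρ, ρp, ρm, _, _, _, hdec⟩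
      rw [decomp_iff n r hr] at hdec
      exact ⟨ρp - ρm, fun x => by obtain ⟨h1, h2⟩ := hdec x; linarith⟩
    · rintro ⟨c, hc⟩
      refine ⟨fun x => min (r x (x+1)) (r (x+1) x), max c 0, max (-c) 0,
        fun x => le_min (hr.1 _ _) (hr.1 _ _), le_max_right _ _, le_max_right _ _, ?_⟩
      rw [decomp_iff n r hr]
      intro x
      have hx := hc x
      have h1 := minmax1 (r x (x+1)) (r (x+1) x)
      have h2 := minmax2 (r x (x+1)) (r (x+1) x)
      have e1 : max c 0 = max (r x (x+1) - r (x+1) x) 0 := by rw [hx]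
      have e2 : max (-c) 0 = max (r (x+1) x - r x (x+1)) 0 := by rw [← hx, neg_sub]
      constructor
      · rw [e1]; linarith
      · rw [e2]; linarith
  · intro c hc ρ ρp ρm
    constructor
    · rintro ⟨h0, hp0, hm0, hdec⟩
      rw [decomp_iff n r hr] at hdec
      have hcval : c = ρp - ρm := by
        obtain ⟨h1, h2⟩ := hdec 0
        have := hc 0
        linarith
      have hminx : ∀ x, min (r x (x+1)) (r (x+1) x) = ρ x + min ρp ρm := by
        intro x
        obtain ⟨h1, h2⟩ := hdec x
        rw [h1, h2, min_add_add_left]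
      refine ⟨min ρp ρm, le_min hp0 hm0, ?_, ?_, ?_, ?_⟩
      · unfold mMin
        apply Finset.le_inf'
        intro x _
        rw [hminx x]
        have := h0 x
        linarith
      · intro x; rw [hminx x]; ring
      · rw [hcval]
        have := minmax1 ρp ρm
        linarith
      · have e : -c = ρm - ρp := by rw [hcval]; ring
        rw [e]
        have := minmax2 ρp ρm
        linarith
    · rintro ⟨a, ha0, haM, hρ, hρp, hρm⟩
      have hM : ∀ x : V1 n, a ≤ min (r x (x+1)) (r (x+1) x) := by
        intro x
        refine haM.trans ?_
        unfold mMin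
        exact Finset.inf'_le _ (Finset.mem_univ x)
      refine ⟨fun x => by rw [hρ x]; linarith [hM x],
        by rw [hρp]; exact add_nonneg (le_max_right _ _) ha0,
        by rw [hρm]; exact add_nonneg (le_max_right _ _) ha0, ?_⟩
      rw [decomp_iff n r hr]
      intro x
      have hx := hc x
      have h1 := minmax1 (r x (x+1)) (r (x+1) x)
      have h2 := minmax2 (r x (x+1)) (r (x+1) x)
      have e1 : max c 0 = max (r x (x+1) - r (x+1) x) 0 := by rw [hx]
      have e2 : max (-c) 0 = max (r (x+1) x - r x (x+1)) 0 := by rw [← hx, neg_sub]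
      constructor
      · rw [hρ x, hρp, e1]; linarith
      · rw [hρ x, hρm, e2]; linarith


end Torus1D
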